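/- Let γ : (a,b) → D be a maximal field-line of the Green's function g of a Dirichlet regular domain D containing ∞, with a > 0. Then the descending limit γ(a) := lim_{t→a⁺} γ(t) exists in ℂ and is a critical point of g. -/

import Mathlib

open MeasureTheory Set Filter Topology
open scoped ENNReal

noncomputable def energy (μ : Measure ℂ) : EReal :=
  ((∫⁻ p : ℂ × ℂ, ENNReal.ofReal (Real.log (‖p.1 - p.2‖)) ∂(μ.prod μ) : ℝ≥0∞) : EReal)
  - ((∫⁻ p : ℂ × ℂ, (if p.1 = p.2 then (⊤ : ℝ≥0∞)
      else ENNReal.ofReal (-(Real.log (‖p.1 - p.2‖)))) ∂(μ.prod μ) : ℝ≥0∞) : EReal)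

noncomputable def expE (x : EReal) : ℝ := if x = ⊥ then 0 else Real.exp x.toReal

def suppIn (μ : Measure ℂ) (K : Set ℂ) : Prop := ∃ C : Set ℂ, IsCompact C ∧ C ⊆ K ∧ μ Cᶜ = 0

noncomputable def capacity (K : Set ℂ) : ℝ :=
  sSup {r : ℝ | ∃ μ : Measure ℂ, IsProbabilityMeasure μ ∧ suppIn μ K ∧ r = expE (energy μ)}

def IsPolar (E : Set ℂ) : Prop :=
  ∀ μ : Measure ℂ, IsProbabilityMeasure μ → suppIn μ E → energy μ = ⊥

noncomputable def lap (f : ℂ → ℝ) (z : ℂ) : ℝ :=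
  fderiv ℝ (fun w => fderiv ℝ f w 1) z 1 + fderiv ℝ (fun w => fderiv ℝ f w Complex.I) z Complex.I

def HarmonicOnD (f : ℂ → ℝ) (s : Set ℂ) : Prop :=
  ContDiffOn ℝ 2 f s ∧ ∀ z ∈ s, lap f z = 0

def SubharmonicOnD (f : ℂ → ℝ) (s : Set ℂ) : Prop :=
  UpperSemicontinuousOn f s ∧ ∀ z ∈ s, ∀ r : ℝ, 0 < r → Metric.closedBall z r ⊆ s →
    f z ≤ (1 / (2 * Real.pi)) * ∫ t in (0:ℝ)..(2 * Real.pi), f (z + r * Complex.exp (Complex.I * t))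

def finPart (D : Set (OnePoint ℂ)) : Set ℂ := {z : ℂ | (z : OnePoint ℂ) ∈ D}

def unbDom (K : Set ℂ) : Set (OnePoint ℂ) :=
  connectedComponentIn ((fun z : ℂ => (z : OnePoint ℂ)) '' K)ᶜ OnePoint.infty

def IsGreens (D : Set (OnePoint ℂ)) (g : ℂ → ℝ) : Prop :=
  (∀ z : ℂ, 0 ≤ g z) ∧
  SubharmonicOnD g Set.univ ∧
  HarmonicOnD g (finPart D) ∧
  (∃ M r : ℝ, ∀ z : ℂ, r ≤ ‖z‖ → |g z - Real.log (‖z‖)| ≤ M) ∧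
  (∀ r : ℝ, ∃ M : ℝ, ∀ z : ℂ, ‖z‖ ≤ r → |g z| ≤ M) ∧
  (∀ z : ℂ, z ∉ closure (finPart D) → g z = 0) ∧
  (∃ P : Set ℂ, IsPolar P ∧ ∀ ζ ∈ frontier (finPart D) \ P,
     Filter.Tendsto g (nhdsWithin ζ (finPart D)) (nhds 0))

noncomputable def gradC (g : ℂ → ℝ) (z : ℂ) : ℂ :=
  (fderiv ℝ g z 1 : ℝ) + (fderiv ℝ g z Complex.I : ℝ) * Complex.I

def FieldLine (g : ℂ → ℝ) (s : Set ℂ) (γ : ℝ → ℂ) (a b : ℝ) : Prop :=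
  ∀ t ∈ Set.Ioo a b, γ t ∈ s ∧ gradC g (γ t) ≠ 0 ∧
    HasDerivAt γ ((starRingEnd ℂ) (gradC g (γ t)) / (((‖gradC g (γ t)‖ : ℝ) : ℂ))^2) t ∧
    g (γ t) = t

noncomputable def Pc (K : Set ℂ) : Set ℂ :=
  K ∪ {z : ℂ | z ∉ K ∧ Bornology.IsBounded (connectedComponentIn Kᶜ z)}

/-- A maximal field-line of g on (a,b): it solves the field-line ODE and admits no proper
extension to a larger interval. -/
def MaxFieldLine (g : ℂ → ℝ) (s : Set ℂ) (γ : ℝ → ℂ) (a b : ℝ) : Prop :=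
  FieldLine g s γ a b ∧
  ∀ (a' b' : ℝ) (γ' : ℝ → ℂ), a' ≤ a → b ≤ b' → FieldLine g s γ' a' b' →
    (∀ t ∈ Set.Ioo a b, γ' t = γ t) → a' = a ∧ b' = b

section AuxLemmas

open Filter Set Topology

lemma realCLM_decomp (f : ℂ →L[ℝ] ℝ) (v : ℂ) : f v = v.re * f 1 + v.im * f Complex.I := by
  have hv : v = v.re • (1:ℂ) + v.im • Complex.I := by
    simp [Complex.real_smul, Complex.re_add_im]
  calc f v = f (v.re • (1:ℂ) + v.im • Complex.I) := by rw [← hv]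
    _ = v.re • f 1 + v.im • f Complex.I := by rw [map_add, _root_.map_smul, _root_.map_smul]
    _ = v.re * f 1 + v.im * f Complex.I := by simp [smul_eq_mul]

lemma velocity_ofReal {p : ℝ} (hp : p ≠ 0) :
    (starRingEnd ℂ) ((p : ℝ) : ℂ) / ((‖((p : ℝ) : ℂ)‖ : ℝ) : ℂ)^2 = ((p⁻¹ : ℝ) : ℂ) := by
  rw [Complex.conj_ofReal, Complex.norm_real, Real.norm_eq_abs]
  have h2 : ((|p| : ℝ) : ℂ)^2 = ((p^2 : ℝ) : ℂ) := by
    norm_cast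
    exact sq_abs p
  rw [h2, ← Complex.ofReal_div]
  congr 1
  field_simp [pow_two]

lemma holoConjGrad {s : Set ℂ} (hs : IsOpen s) {g : ℂ → ℝ} (hg : ContDiffOn ℝ 2 g s)
    (hlap : ∀ z ∈ s, lap g z = 0) {w : ℂ} (hw : w ∈ s) :
    DifferentiableAt ℂ (fun u => (starRingEnd ℂ) (gradC g u)) w := by
  have hgw : ContDiffAt ℝ 2 g w := hg.contDiffAt (hs.mem_nhds hw)
  have hC1 : ContDiffAt ℝ 1 (fderiv ℝ g) w := hgw.fderiv_right (by norm_num)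
  have hd : DifferentiableAt ℝ (fderiv ℝ g) w := hC1.differentiableAt (by norm_num)
  set Φ : ℂ →L[ℝ] (ℂ →L[ℝ] ℝ) := fderiv ℝ (fderiv ℝ g) w with hΦdef
  have hev : ∀ᶠ y in 𝓝 w, HasFDerivAt g (fderiv ℝ g y) y := by
    filter_upwards [hs.mem_nhds hw] with y hy
    exact ((hg.contDiffAt (hs.mem_nhds hy)).differentiableAt (by norm_num)).hasFDerivAt
  have hsymm : ∀ v u : ℂ, Φ v u = Φ u v := fun v u =>
    second_derivative_symmetric_of_eventually hev hd.hasFDerivAt v u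
  have hp : HasFDerivAt (fun u => fderiv ℝ g u (1:ℂ))
      ((ContinuousLinearMap.apply ℝ ℝ (1:ℂ)).comp Φ) w :=
    (ContinuousLinearMap.apply ℝ ℝ (1:ℂ)).hasFDerivAt.comp w hd.hasFDerivAt
  have hq : HasFDerivAt (fun u => fderiv ℝ g u Complex.I)
      ((ContinuousLinearMap.apply ℝ ℝ Complex.I).comp Φ) w :=
    (ContinuousLinearMap.apply ℝ ℝ Complex.I).hasFDerivAt.comp w hd.hasFDerivAt
  have hlapw : Φ 1 1 + Φ Complex.I Complex.I = 0 := by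
    have h0 := hlap w hw
    unfold lap at h0
    rw [hp.fderiv, hq.fderiv] at h0
    simpa using h0
  set c : ℂ := ((Φ 1 1 : ℝ) : ℂ) - Complex.I * ((Φ 1 Complex.I : ℝ) : ℂ) with hcdef
  set L : ℂ →L[ℝ] ℂ :=
    Complex.ofRealCLM.comp ((ContinuousLinearMap.apply ℝ ℝ (1:ℂ)).comp Φ) -
      Complex.I • (Complex.ofRealCLM.comp ((ContinuousLinearMap.apply ℝ ℝ Complex.I).comp Φ)) with hLdef
  have hL : HasFDerivAt (fun u => ((fderiv ℝ g u (1:ℂ) : ℝ) : ℂ) -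
      Complex.I * ((fderiv ℝ g u Complex.I : ℝ) : ℂ)) L w := by
    have h1 : HasFDerivAt (fun u => ((fderiv ℝ g u (1:ℂ) : ℝ) : ℂ))
        (Complex.ofRealCLM.comp ((ContinuousLinearMap.apply ℝ ℝ (1:ℂ)).comp Φ)) w :=
      Complex.ofRealCLM.hasFDerivAt.comp w hp
    have h2 : HasFDerivAt (fun u => ((fderiv ℝ g u Complex.I : ℝ) : ℂ))
        (Complex.ofRealCLM.comp ((ContinuousLinearMap.apply ℝ ℝ Complex.I).comp Φ)) w :=
      Complex.ofRealCLM.hasFDerivAt.comp w hq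
    exact h1.sub (h2.const_mul Complex.I)
  have hform : (fun u => (starRingEnd ℂ) (gradC g u)) = (fun u => ((fderiv ℝ g u (1:ℂ) : ℝ) : ℂ) -
      Complex.I * ((fderiv ℝ g u Complex.I : ℝ) : ℂ)) := by
    funext u
    simp only [gradC, map_add, map_mul, Complex.conj_ofReal, Complex.conj_I]
    ring
  have hLlin : (ContinuousLinearMap.smulRight (1 : ℂ →L[ℂ] ℂ) c).restrictScalars ℝ = L := by
    apply ContinuousLinearMap.ext
    intro v
    have hv : v = v.re • (1:ℂ) + v.im • Complex.I := by
      simp [Complex.real_smul, Complex.re_add_im]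
    have hΦv1 : Φ v 1 = v.re * Φ 1 1 + v.im * Φ Complex.I 1 := by
      conv_lhs => rw [hv]
      rw [map_add, _root_.map_smul, _root_.map_smul]
      simp [smul_eq_mul]
    have hΦvI : Φ v Complex.I = v.re * Φ 1 Complex.I + v.im * Φ Complex.I Complex.I := by
      conv_lhs => rw [hv]
      rw [map_add, _root_.map_smul, _root_.map_smul]
      simp [smul_eq_mul]
    have hII : Φ Complex.I Complex.I = -Φ 1 1 := by linarith [hlapw]
    have hI1 : Φ Complex.I 1 = Φ 1 Complex.I := hsymm Complex.I 1
    have lhs : (ContinuousLinearMap.restrictScalars ℝ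
        (ContinuousLinearMap.smulRight (1 : ℂ →L[ℂ] ℂ) c)) v = v * c := by
      simp
    have rhs : L v = ((Φ v 1 : ℝ) : ℂ) - Complex.I * ((Φ v Complex.I : ℝ) : ℂ) := by
      simp [hLdef]
    rw [lhs, rhs, hΦv1, hΦvI, hII, hI1, hcdef]
    apply Complex.ext <;> simp <;> ring
  rw [hform]
  exact (hasFDerivAt_of_restrictScalars ℝ hL hLlin).differentiableAt

end AuxLemmas

/-- For a maximal field-line γ : (a,b) → D of the Green's function of a Dirichlet regular
domain D containing ∞, with a > 0, the descending limit γ(a) exists in ℂ and is a critical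
point of g. -/
theorem descending_landing_point (D : Set (OnePoint ℂ)) (hDo : IsOpen D) (hDc : IsConnected D)
    (hinf : OnePoint.infty ∈ D) (hne : D ≠ Set.univ)
    (hnp : ¬ IsPolar {z : ℂ | (z : OnePoint ℂ) ∉ D})
    (g : ℂ → ℝ) (hg : IsGreens D g)
    (hreg : ∀ ζ ∈ frontier (finPart D), Filter.Tendsto g (nhdsWithin ζ (finPart D)) (nhds 0))
    (a b : ℝ) (ha : 0 < a) (hab : a < b) (γ : ℝ → ℂ)
    (hγ : MaxFieldLine g (finPart D) γ a b) :
    ∃ z : ℂ, Filter.Tendsto γ (nhdsWithin a (Set.Ioi a)) (nhds z) ∧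
      z ∈ finPart D ∧ fderiv ℝ g z = 0 := by
  classical
  -- basic setup
  have hso : IsOpen (finPart D) := hDo.preimage OnePoint.continuous_coe
  obtain ⟨hgC2, hlap⟩ := hg.2.2.1
  have hFL := hγ.1
  have hdgat : ∀ w ∈ finPart D, DifferentiableAt ℝ g w := fun w hw =>
    (hgC2.contDiffAt (hso.mem_nhds hw)).differentiableAt (by norm_num)
  -- key pointwise fact along the curve: ∂g/∂y = 0 and ∂g/∂x ≠ 0
  have hkey : ∀ t ∈ Set.Ioo a b,
      fderiv ℝ g (γ t) Complex.I = 0 ∧ fderiv ℝ g (γ t) 1 ≠ 0 := by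
    intro t ht
    obtain ⟨hmem, hgne, hder, _⟩ := hFL t ht
    set v := (starRingEnd ℂ) (gradC g (γ t)) / ((‖gradC g (γ t)‖ : ℝ) : ℂ)^2 with hvdef
    have h1 : HasDerivAt (fun u => g (γ u)) (fderiv ℝ g (γ t) v) t :=
      (hdgat _ hmem).hasFDerivAt.comp_hasDerivAt t hder
    have h2 : HasDerivAt (fun u => g (γ u)) 1 t := by
      have hev : (fun u => g (γ u)) =ᶠ[𝓝 t] (fun u => u) := by
        filter_upwards [isOpen_Ioo.mem_nhds ht] with u hu
        exact (hFL u hu).2.2.2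
      exact (hasDerivAt_id t).congr_of_eventuallyEq hev
    have heq : fderiv ℝ g (γ t) v = 1 := h1.unique h2
    set p := fderiv ℝ g (γ t) 1 with hpdef
    set q := fderiv ℝ g (γ t) Complex.I with hqdef
    have hre : (gradC g (γ t)).re = p := by simp [gradC, hpdef]
    have him : (gradC g (γ t)).im = q := by simp [gradC, hqdef]
    have hns : Complex.normSq (gradC g (γ t)) = p^2 + q^2 := by
      rw [Complex.normSq_apply, hre, him]; ring
    have hnpos : 0 < p^2 + q^2 := by
      rw [← hns]; exact Complex.normSq_pos.2 hgne
    have habs : ((‖gradC g (γ t)‖ : ℝ) : ℂ)^2 = ((p^2 + q^2 : ℝ) : ℂ) := by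
      rw [← Complex.ofReal_pow, Complex.sq_norm, hns]
    have hvre : v.re = p / (p^2 + q^2) := by
      rw [hvdef, habs, Complex.div_ofReal_re, Complex.conj_re, hre]
    have hvim : v.im = -q / (p^2 + q^2) := by
      rw [hvdef, habs, Complex.div_ofReal_im, Complex.conj_im, him]
    rw [realCLM_decomp, hvre, hvim, ← hpdef, ← hqdef] at heq
    have hq0 : q = 0 := by
      have hsq : q^2 = 0 := by
        field_simp at heq
        nlinarith [heq]
      exact pow_eq_zero_iff (n := 2) (by norm_num) |>.1 hsq
    refine ⟨hq0, fun hp0 => ?_⟩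
    rw [hp0, hq0] at hnpos
    norm_num at hnpos
  -- the gradient along the curve is the real number p, and velocity is 1/p
  have hgrad_eq : ∀ t ∈ Set.Ioo a b, gradC g (γ t) = ((fderiv ℝ g (γ t) 1 : ℝ) : ℂ) := by
    intro t ht
    simp [gradC, (hkey t ht).1]
  have hvel : ∀ t ∈ Set.Ioo a b,
      (starRingEnd ℂ) (gradC g (γ t)) / ((‖gradC g (γ t)‖ : ℝ) : ℂ)^2 =
        (((fderiv ℝ g (γ t) 1)⁻¹ : ℝ) : ℂ) := by
    intro t ht
    rw [hgrad_eq t ht]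
    exact velocity_ofReal (hkey t ht).2
  have hγder : ∀ t ∈ Set.Ioo a b,
      HasDerivAt γ ((((fderiv ℝ g (γ t) 1)⁻¹ : ℝ) : ℂ)) t := by
    intro t ht
    have := (hFL t ht).2.2.1
    rwa [hvel t ht] at this
  -- derivatives of the coordinates
  have hX : ∀ t ∈ Set.Ioo a b,
      HasDerivAt (fun u => (γ u).re) ((fderiv ℝ g (γ t) 1)⁻¹) t := by
    intro t ht
    have := Complex.reCLM.hasFDerivAt.comp_hasDerivAt t (hγder t ht)
    simp at this; exact this
  have hY : ∀ t ∈ Set.Ioo a b, HasDerivAt (fun u => (γ u).im) 0 t := by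
    intro t ht
    have := Complex.imCLM.hasFDerivAt.comp_hasDerivAt t (hγder t ht)
    simp at this; exact this
  -- the imaginary part is constant
  set t₀ : ℝ := (a + b) / 2 with ht₀def
  have ht₀ : t₀ ∈ Set.Ioo a b := ⟨by simp only [ht₀def]; linarith, by simp only [ht₀def]; linarith⟩
  set y₀ : ℝ := (γ t₀).im with hy₀def
  have hconst : ∀ t ∈ Set.Ioo a b, (γ t).im = y₀ := by
    have key : ∀ u v : ℝ, u ∈ Set.Ioo a b → v ∈ Set.Ioo a b → u ≤ v →
        (γ v).im = (γ u).im := by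
      intro u v hu hv huv
      have hsub : Set.Icc u v ⊆ Set.Ioo a b := Set.Icc_subset_Ioo hu.1 hv.2
      exact constant_of_has_deriv_right_zero
        (fun x hx => ((hY x (hsub hx)).continuousAt).continuousWithinAt)
        (fun x hx => ((hY x (hsub (Set.Ico_subset_Icc_self hx))).hasDerivWithinAt))
        v (Set.right_mem_Icc.2 huv)
    intro t ht
    rcases le_total t t₀ with h | h
    · exact (key t t₀ ht ht₀ h).symm ▸ rfl
    · exact key t₀ t ht₀ ht h
  -- boundedness of the curve
  obtain ⟨M, r, hMr⟩ := hg.2.2.2.1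
  set R : ℝ := max r (Real.exp (b + M)) with hRdef
  have hRbound : ∀ t ∈ Set.Ioo a b, ‖γ t‖ ≤ R := by
    intro t ht
    rcases lt_or_ge (‖γ t‖) r with h | h
    · exact h.le.trans (le_max_left _ _)
    · have hb2 := abs_le.1 (hMr (γ t) h)
      have hval : g (γ t) = t := (hFL t ht).2.2.2
      have hlog : Real.log (‖γ t‖) ≤ b + M := by
        have := hb2.1
        rw [hval] at this
        linarith [ht.2.le]
      have habs : ‖γ t‖ ≤ Real.exp (b + M) := by
        rcases le_or_gt (‖γ t‖) 0 with h0 | h0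
        · exact h0.trans (Real.exp_pos _).le
        · calc ‖γ t‖ = Real.exp (Real.log (‖γ t‖)) :=
                (Real.exp_log h0).symm
            _ ≤ Real.exp (b + M) := Real.exp_le_exp.2 hlog
      exact habs.trans (le_max_right _ _)
  -- continuity facts
  have hfdc : ContinuousOn (fderiv ℝ g) (finPart D) :=
    hgC2.continuousOn_fderiv_of_isOpen hso (by norm_num)
  have hγcont : ∀ t ∈ Set.Ioo a b, ContinuousAt γ t := fun t ht => (hγder t ht).continuousAt
  have hPcont : ContinuousOn (fun t => fderiv ℝ g (γ t) 1) (Set.Ioo a b) := by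
    have h1 : ContinuousOn (fun t => fderiv ℝ g (γ t)) (Set.Ioo a b) :=
      hfdc.comp (fun t ht => (hγcont t ht).continuousWithinAt) (fun t ht => (hFL t ht).1)
    exact (ContinuousLinearMap.apply ℝ ℝ (1:ℂ)).continuous.comp_continuousOn h1
  -- constant sign of ∂g/∂x along the curve
  have hsign : (∀ t ∈ Set.Ioo a b, 0 < fderiv ℝ g (γ t) 1) ∨
      (∀ t ∈ Set.Ioo a b, fderiv ℝ g (γ t) 1 < 0) := by
    by_contra hcon
    push_neg at hcon
    obtain ⟨⟨t₁, ht₁, h₁⟩, ⟨t₂, ht₂, h₂⟩⟩ := hcon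
    have h₁' : fderiv ℝ g (γ t₁) 1 < 0 := lt_of_le_of_ne h₁ (hkey t₁ ht₁).2
    have h₂' : 0 < fderiv ℝ g (γ t₂) 1 := lt_of_le_of_ne h₂ (Ne.symm (hkey t₂ ht₂).2)
    rcases le_total t₁ t₂ with h | h
    · have hsub : Set.Icc t₁ t₂ ⊆ Set.Ioo a b := Set.Icc_subset_Ioo ht₁.1 ht₂.2
      obtain ⟨x, hx, hx0⟩ := intermediate_value_Icc h (hPcont.mono hsub) ⟨h₁'.le, h₂'.le⟩
      exact (hkey x (hsub hx)).2 hx0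
    · have hsub : Set.Icc t₂ t₁ ⊆ Set.Ioo a b := Set.Icc_subset_Ioo ht₂.1 ht₁.2
      obtain ⟨x, hx, hx0⟩ := intermediate_value_Icc' h (hPcont.mono hsub) ⟨h₁'.le, h₂'.le⟩
      exact (hkey x (hsub hx)).2 hx0
  -- the real part converges
  have hnonempty : (Set.Ioo a b).Nonempty := ⟨t₀, ht₀⟩
  have hXcont : ContinuousOn (fun u => (γ u).re) (Set.Ioo a b) :=
    fun t ht => ((hX t ht).continuousAt).continuousWithinAt
  have hXbd1 : ∀ t ∈ Set.Ioo a b, -R ≤ (γ t).re ∧ (γ t).re ≤ R := by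
    intro t ht
    have := (Complex.abs_re_le_norm (γ t)).trans (hRbound t ht)
    exact abs_le.1 this
  obtain ⟨x₀, hx₀⟩ : ∃ x₀ : ℝ, Tendsto (fun t => (γ t).re) (𝓝[>] a) (𝓝 x₀) := by
    rcases hsign with hpos | hneg
    · have hmono : StrictMonoOn (fun u => (γ u).re) (Set.Ioo a b) := by
        apply strictMonoOn_of_deriv_pos (convex_Ioo a b) hXcont
        intro x hx
        rw [interior_Ioo] at hx
        rw [(hX x hx).deriv]
        exact inv_pos.2 (hpos x hx)
      refine ⟨_, MonotoneOn.tendsto_nhdsWithin_Ioo_right hnonempty hmono.monotoneOn ?_⟩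
      refine ⟨-R, ?_⟩
      rintro y ⟨t, ht, rfl⟩
      exact (hXbd1 t ht).1
    · have hmono : StrictAntiOn (fun u => (γ u).re) (Set.Ioo a b) := by
        apply strictAntiOn_of_deriv_neg (convex_Ioo a b) hXcont
        intro x hx
        rw [interior_Ioo] at hx
        rw [(hX x hx).deriv]
        exact inv_neg''.2 (hneg x hx)
      refine ⟨_, AntitoneOn.tendsto_nhdsWithin_Ioo_right hnonempty hmono.antitoneOn ?_⟩
      refine ⟨R, ?_⟩
      rintro y ⟨t, ht, rfl⟩
      exact (hXbd1 t ht).2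
  -- the limit point z
  set z : ℂ := (x₀ : ℂ) + (y₀ : ℂ) * Complex.I with hzdef
  have hzre : z.re = x₀ := by simp [hzdef]
  have hzim : z.im = y₀ := by simp [hzdef]
  have hIoo : Set.Ioo a b ∈ 𝓝[>] a := Ioo_mem_nhdsGT_of_mem ⟨le_refl a, hab⟩
  have hz : Tendsto γ (𝓝[>] a) (𝓝 z) := by
    have h1 : Tendsto (fun t => (((γ t).re : ℝ) : ℂ) + (y₀ : ℂ) * Complex.I) (𝓝[>] a) (𝓝 z) := by
      rw [hzdef]
      exact ((Complex.continuous_ofReal.tendsto x₀).comp hx₀).add tendsto_const_nhds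
    apply h1.congr'
    filter_upwards [hIoo] with t ht
    rw [← hconst t ht]
    exact Complex.re_add_im (γ t)
  have hmem_ev : ∀ᶠ t in 𝓝[>] a, γ t ∈ finPart D := by
    filter_upwards [hIoo] with t ht
    exact (hFL t ht).1
  -- g(γ t) → a
  have hgγ : Tendsto (fun t => g (γ t)) (𝓝[>] a) (𝓝 a) := by
    have hid : Tendsto (fun t : ℝ => t) (𝓝[>] a) (𝓝 a) := tendsto_id.mono_right nhdsWithin_le_nhds
    apply hid.congr'
    filter_upwards [hIoo] with t ht
    exact ((hFL t ht).2.2.2).symm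
  -- z belongs to the domain
  have hzs : z ∈ finPart D := by
    by_contra hzs
    have hzcl : z ∈ closure (finPart D) := mem_closure_of_tendsto hz hmem_ev
    have hfr : z ∈ frontier (finPart D) := ⟨hzcl, by rwa [hso.interior_eq]⟩
    have h0 : Tendsto (fun t => g (γ t)) (𝓝[>] a) (𝓝 0) :=
      (hreg z hfr).comp (tendsto_nhdsWithin_iff.2 ⟨hz, hmem_ev⟩)
    exact ha.ne' (tendsto_nhds_unique hgγ h0)
  have hgcontz : ContinuousAt g z := (hgC2.contDiffAt (hso.mem_nhds hzs)).continuousAt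
  have hgz : g z = a := tendsto_nhds_unique (hgcontz.tendsto.comp hz) hgγ
  -- main dichotomy
  by_cases hcrit : gradC g z = 0
  · refine ⟨z, hz, hzs, ?_⟩
    have hpq : fderiv ℝ g z 1 = 0 ∧ fderiv ℝ g z Complex.I = 0 := by
      have hre := congrArg Complex.re hcrit
      have him := congrArg Complex.im hcrit
      simp [gradC] at hre him
      exact ⟨hre, him⟩
    apply ContinuousLinearMap.ext
    intro v
    rw [realCLM_decomp]
    simp [hpq.1, hpq.2]
  · exfalso
    -- q vanishes at z by continuity
    have hpcontz : ContinuousAt (fun w => fderiv ℝ g w 1) z :=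
      (ContinuousLinearMap.apply ℝ ℝ (1:ℂ)).continuous.continuousAt.comp
        (hfdc.continuousAt (hso.mem_nhds hzs))
    have hqcontz : ContinuousAt (fun w => fderiv ℝ g w Complex.I) z :=
      (ContinuousLinearMap.apply ℝ ℝ Complex.I).continuous.continuousAt.comp
        (hfdc.continuousAt (hso.mem_nhds hzs))
    have hq₀ : fderiv ℝ g z Complex.I = 0 := by
      have h1 : Tendsto (fun t => fderiv ℝ g (γ t) Complex.I) (𝓝[>] a)
          (𝓝 (fderiv ℝ g z Complex.I)) := hqcontz.tendsto.comp hz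
      have h2 : Tendsto (fun t => fderiv ℝ g (γ t) Complex.I) (𝓝[>] a) (𝓝 0) := by
        apply tendsto_const_nhds.congr'
        filter_upwards [hIoo] with t ht
        exact ((hkey t ht).1).symm
      exact tendsto_nhds_unique h1 h2
    have hgradz : gradC g z = ((fderiv ℝ g z 1 : ℝ) : ℂ) := by simp [gradC, hq₀]
    have hp₀ : fderiv ℝ g z 1 ≠ 0 := by
      intro h0
      apply hcrit
      rw [hgradz, h0]
      simp
    -- the conjugate gradient is holomorphic
    set F : ℂ → ℂ := fun u => (starRingEnd ℂ) (gradC g u) with hFdef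
    have hol : ∀ w ∈ finPart D, DifferentiableAt ℂ F w := fun w hw =>
      holoConjGrad hso hgC2 hlap hw
    obtain ⟨r₁, hr₁pos, hball₁⟩ := Metric.isOpen_iff.1 hso z hzs
    set σ : ℂ → ℂ := fun w => (starRingEnd ℂ) (w - z) + z with hσdef
    have hσsub : ∀ w : ℂ, σ w - z = (starRingEnd ℂ) (w - z) := by
      intro w; rw [hσdef]; ring
    have hσmem : ∀ w ∈ Metric.ball z r₁, σ w ∈ Metric.ball z r₁ := by
      intro w hw
      rw [Metric.mem_ball, Complex.dist_eq] at hw ⊢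
      rw [hσsub w, Complex.norm_conj]
      exact hw
    have hσfix : ∀ u : ℂ, u.im = y₀ → σ u = u := by
      intro u him
      have h1 : (u - z).im = 0 := by rw [Complex.sub_im, him, hzim]; ring
      rw [hσdef]
      simp only []
      rw [Complex.conj_eq_iff_im.2 h1]
      ring
    set H : ℂ → ℂ := fun w => F w - (starRingEnd ℂ) (F (σ w)) with hHdef
    have hHdiff : DifferentiableOn ℂ H (Metric.ball z r₁) := by
      intro w hw
      have h1 : DifferentiableAt ℂ F w := hol w (hball₁ hw)
      have h2 : DifferentiableAt ℂ (fun x => (starRingEnd ℂ) (F (σ x))) w := by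
        have hu : σ w ∈ finPart D := hball₁ (hσmem w hw)
        have hFd : DifferentiableAt ℂ F (σ w) := hol _ hu
        set c : ℂ := deriv F (σ w) with hcdef
        have hc : HasDerivAt F c (σ w) := hFd.hasDerivAt
        have hconjd : ∀ u : ℂ, HasFDerivAt (fun x : ℂ => (starRingEnd ℂ) x)
            (Complex.conjCLE.toContinuousLinearMap) u := fun u => Complex.conjCLE.hasFDerivAt
        have hσ' : HasFDerivAt σ (Complex.conjCLE.toContinuousLinearMap) w := by
          have hsub : HasFDerivAt (fun x : ℂ => x - z) (ContinuousLinearMap.id ℝ ℂ) w :=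
            (hasFDerivAt_id w).sub_const z
          have hcomp := ((hconjd (w - z)).comp w hsub).add_const z
          rw [ContinuousLinearMap.comp_id] at hcomp
          exact hcomp
        have hmid : HasFDerivAt F
            ((ContinuousLinearMap.smulRight (1 : ℂ →L[ℂ] ℂ) c).restrictScalars ℝ) (σ w) :=
          hc.hasFDerivAt.restrictScalars ℝ
        have hcomp : HasFDerivAt (fun x => (starRingEnd ℂ) (F (σ x)))
            ((Complex.conjCLE.toContinuousLinearMap).comp
              (((ContinuousLinearMap.smulRight (1 : ℂ →L[ℂ] ℂ) c).restrictScalars ℝ).comp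
                (Complex.conjCLE.toContinuousLinearMap))) w :=
          (hconjd (F (σ w))).comp w (hmid.comp w hσ')
        have heq : (ContinuousLinearMap.smulRight (1 : ℂ →L[ℂ] ℂ)
            ((starRingEnd ℂ) c)).restrictScalars ℝ =
            (Complex.conjCLE.toContinuousLinearMap).comp
              (((ContinuousLinearMap.smulRight (1 : ℂ →L[ℂ] ℂ) c).restrictScalars ℝ).comp
                (Complex.conjCLE.toContinuousLinearMap)) := by
          apply ContinuousLinearMap.ext
          intro v
          simp [smul_eq_mul, map_mul, mul_comm]
        exact (hasFDerivAt_of_restrictScalars ℝ hcomp heq).differentiableAt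
      exact (h1.sub h2).differentiableWithinAt
    have hHanal : AnalyticOnNhd ℂ H (Metric.ball z r₁) :=
      hHdiff.analyticOnNhd Metric.isOpen_ball
    have hγne : ∀ᶠ t in 𝓝[>] a, γ t ≠ z := by
      filter_upwards [hIoo, self_mem_nhdsWithin] with t ht hta
      intro hgt
      have hv := (hFL t ht).2.2.2
      rw [hgt, hgz] at hv
      rw [← hv] at hta
      exact lt_irrefl a hta
    have hHγ0 : ∀ᶠ t in 𝓝[>] a, H (γ t) = 0 := by
      filter_upwards [hIoo] with t ht
      have hσγ : σ (γ t) = γ t := hσfix (γ t) (hconst t ht)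
      rw [hHdef]
      simp only []
      rw [hσγ, hFdef]
      simp only []
      rw [hgrad_eq t ht, Complex.conj_ofReal, Complex.conj_ofReal]
      ring
    have hmapne : Tendsto γ (𝓝[>] a) (𝓝[≠] z) := tendsto_nhdsWithin_iff.2 ⟨hz, hγne⟩
    have hfreq : ∃ᶠ x in 𝓝[≠] z, H x = 0 := hmapne.frequently hHγ0.frequently
    have hH0 : Set.EqOn H 0 (Metric.ball z r₁) :=
      hHanal.eqOn_zero_of_preconnected_of_frequently_eq_zero
        (convex_ball z r₁).isPreconnected (Metric.mem_ball_self hr₁pos) hfreq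
    have hq_line : ∀ u ∈ Metric.ball z r₁, u.im = y₀ → fderiv ℝ g u Complex.I = 0 := by
      intro u hu him
      have h0 : H u = 0 := hH0 hu
      rw [hHdef] at h0
      simp only [] at h0
      rw [hσfix u him] at h0
      have him2 : (F u).im = 0 := by
        have := congrArg Complex.im h0
        simp only [Complex.sub_im, Complex.conj_im, Complex.zero_im] at this
        linarith
      have him3 : (gradC g u).im = 0 := by
        rw [hFdef] at him2
        simp only [Complex.conj_im] at him2
        linarith
      simpa [gradC] using him3
    -- choose a smaller ball where ∂g/∂x does not vanish
    obtain ⟨r₂', hr₂'pos, hr₂'⟩ := Metric.eventually_nhds_iff_ball.1 (hpcontz.eventually_ne hp₀)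
    set r₂ : ℝ := min r₂' r₁ with hr₂def
    have hr₂pos : 0 < r₂ := lt_min hr₂'pos hr₁pos
    have hball₂₁ : Metric.ball z r₂ ⊆ Metric.ball z r₁ := Metric.ball_subset_ball (min_le_right _ _)
    have hball₂' : Metric.ball z r₂ ⊆ Metric.ball z r₂' := Metric.ball_subset_ball (min_le_left _ _)
    -- the one-dimensional restriction of g to the horizontal line
    set ι : ℝ → ℂ := fun x => (x : ℂ) + (y₀ : ℂ) * Complex.I with hιdef
    have hιz : ι x₀ = z := by rw [hιdef, hzdef]
    set h : ℝ → ℝ := fun x => g (ι x) with hhdef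
    have hιder : ∀ x : ℝ, HasDerivAt ι 1 x := by
      intro x
      have := ((hasDerivAt_id x).ofReal_comp (z := x)).add_const ((y₀ : ℂ) * Complex.I)
      simpa [hιdef] using this
    have hhder : ∀ x : ℝ, ι x ∈ finPart D → HasDerivAt h (fderiv ℝ g (ι x) 1) x := by
      intro x hx
      have := (hdgat _ hx).hasFDerivAt.comp_hasDerivAt x (hιder x)
      exact this
    have hhC1 : ContDiffAt ℝ 1 h x₀ := by
      have hι : ContDiff ℝ 1 ι := by
        rw [hιdef]
        exact Complex.ofRealCLM.contDiff.add contDiff_const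
      have hgz2 : ContDiffAt ℝ 1 g (ι x₀) := by
        rw [hιz]
        exact (hgC2.contDiffAt (hso.mem_nhds hzs)).of_le (by norm_num)
      exact hgz2.comp x₀ hι.contDiffAt
    have hstrict : HasStrictDerivAt h (fderiv ℝ g z 1) x₀ := by
      apply hhC1.hasStrictDerivAt' _ (by norm_num)
      have := hhder x₀ (by rw [hιz]; exact hzs)
      rwa [hιz] at this
    have hSF : HasStrictFDerivAt h ((ContinuousLinearEquiv.unitsEquivAut ℝ
        (Units.mk0 _ hp₀)) : ℝ →L[ℝ] ℝ) x₀ := hstrict.hasStrictFDerivAt_equiv hp₀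
    set Ψ : OpenPartialHomeomorph ℝ ℝ := hSF.toOpenPartialHomeomorph h with hΨdef
    have hΨcoe : ⇑Ψ = h := hSF.toOpenPartialHomeomorph_coe
    have hx₀src : x₀ ∈ Ψ.source := hSF.mem_toOpenPartialHomeomorph_source
    have hhx₀ : h x₀ = a := by rw [hhdef]; simp only []; rw [hιz, hgz]
    have hattgt : a ∈ Ψ.target := by
      have := hSF.image_mem_toOpenPartialHomeomorph_target
      rwa [hhx₀] at this
    set φ : ℝ → ℝ := ⇑Ψ.symm with hφdef
    have hφa : φ a = x₀ := by
      have := Ψ.left_inv hx₀src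
      rw [hΨcoe, hhx₀] at this
      exact this
    have hφconta : ContinuousAt φ a := by
      rw [hφdef]
      apply Ψ.symm.continuousAt
      rw [OpenPartialHomeomorph.symm_source]
      exact hattgt
    have hev1 : ∀ᶠ t in 𝓝 a, t ∈ Ψ.target := Ψ.open_target.eventually_mem hattgt
    have hev2 : ∀ᶠ t in 𝓝 a, ι (φ t) ∈ Metric.ball z r₂ := by
      have htend : Tendsto (fun t => ι (φ t)) (𝓝 a) (𝓝 z) := by
        have h1 : Tendsto φ (𝓝 a) (𝓝 x₀) := by rw [← hφa]; exact hφconta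
        have h2 : Continuous ι := by
          rw [hιdef]
          exact Complex.continuous_ofReal.add continuous_const
        have := (h2.tendsto x₀).comp h1
        rwa [hιz] at this
      exact htend.eventually (Metric.isOpen_ball.eventually_mem (Metric.mem_ball_self hr₂pos))
    obtain ⟨ε, hεpos, hεball⟩ := Metric.eventually_nhds_iff_ball.1 (hev1.and hev2)
    set a' : ℝ := a - ε / 2 with ha'def
    have ha'lt : a' < a := by rw [ha'def]; linarith
    have hgood : ∀ t : ℝ, a' < t → t ≤ a → t ∈ Ψ.target ∧ ι (φ t) ∈ Metric.ball z r₂ := by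
      intro t h1 h2
      apply hεball
      rw [ha'def] at h1
      rw [Metric.mem_ball, Real.dist_eq, abs_sub_lt_iff]
      exact ⟨by linarith, by linarith⟩
    have hφder : ∀ t : ℝ, a' < t → t ≤ a →
        HasDerivAt φ ((fderiv ℝ g (ι (φ t)) 1)⁻¹) t := by
      intro t h1 h2
      obtain ⟨htgt, hwball⟩ := hgood t h1 h2
      have hcont : ContinuousAt φ t := by
        rw [hφdef]
        apply Ψ.symm.continuousAt
        rw [OpenPartialHomeomorph.symm_source]
        exact htgt
      have hws : ι (φ t) ∈ finPart D := hball₁ (hball₂₁ hwball)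
      have hd := hhder (φ t) hws
      have hne : fderiv ℝ g (ι (φ t)) 1 ≠ 0 := hr₂' _ (hball₂' hwball)
      have hfg : ∀ᶠ y in 𝓝 t, h (φ y) = y := by
        filter_upwards [Ψ.open_target.eventually_mem htgt] with y hy
        have := Ψ.right_inv hy
        rwa [hΨcoe] at this
      exact HasDerivAt.of_local_left_inverse hcont hd hne hfg
    set W : ℝ → ℂ := fun t => ι (φ t) with hWdef
    set γ' : ℝ → ℂ := fun t => if a < t then γ t else W t with hγ'def
    have hWim : ∀ t : ℝ, (W t).im = y₀ := by
      intro t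
      rw [hWdef, hιdef]
      simp
    have hWa : W a = z := by
      rw [hWdef]
      simp only []
      rw [hφa, hιz]
    have hWder : ∀ t : ℝ, a' < t → t ≤ a →
        HasDerivAt W ((((fderiv ℝ g (W t) 1)⁻¹ : ℝ) : ℂ)) t := by
      intro t h1 h2
      have := ((hφder t h1 h2).ofReal_comp).add_const ((y₀ : ℂ) * Complex.I)
      simpa [hWdef, hιdef] using this
    have hlinevel : ∀ u : ℂ, u ∈ Metric.ball z r₂ → u.im = y₀ →
        gradC g u ≠ 0 ∧
        (starRingEnd ℂ) (gradC g u) / ((‖gradC g u‖ : ℝ) : ℂ)^2 =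
          (((fderiv ℝ g u 1)⁻¹ : ℝ) : ℂ) := by
      intro u hu him
      have hq := hq_line u (hball₂₁ hu) him
      have hp := hr₂' u (hball₂' hu)
      have hgr : gradC g u = ((fderiv ℝ g u 1 : ℝ) : ℂ) := by simp [gradC, hq]
      refine ⟨?_, ?_⟩
      · rw [hgr]
        exact Complex.ofReal_ne_zero.2 hp
      · rw [hgr]
        exact velocity_ofReal hp
    have hγ'diffIoo : ∀ u ∈ Set.Ioo a b,
        HasDerivAt γ' ((((fderiv ℝ g (γ u) 1)⁻¹ : ℝ) : ℂ)) u := by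
      intro u hu
      have heq : γ' =ᶠ[𝓝 u] γ := by
        filter_upwards [isOpen_Ioi.eventually_mem hu.1] with v hv
        exact if_pos hv
      exact (hγder u hu).congr_of_eventuallyEq heq
    -- γ' is a field line on (a', b)
    have hFL' : FieldLine g (finPart D) γ' a' b := by
      intro t ht
      rcases lt_trichotomy a t with hlt | heqa | hgt
      · have ht' : t ∈ Set.Ioo a b := ⟨hlt, ht.2⟩
        have hgteq : γ' t = γ t := if_pos hlt
        rw [hgteq]
        refine ⟨(hFL t ht').1, (hFL t ht').2.1, ?_, (hFL t ht').2.2.2⟩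
        have heq : γ' =ᶠ[𝓝 t] γ := by
          filter_upwards [isOpen_Ioi.eventually_mem hlt] with v hv
          exact if_pos hv
        exact ((hFL t ht').2.2.1).congr_of_eventuallyEq heq
      · -- t = a
        subst heqa
        have hgteq : γ' a = z := by
          rw [hγ'def]
          simp only []
          rw [if_neg (lt_irrefl a)]
          exact hWa
        rw [hgteq]
        obtain ⟨hgne, hvel'⟩ := hlinevel z (Metric.mem_ball_self hr₂pos) hzim
        refine ⟨hzs, hgne, ?_, hgz⟩
        rw [hvel']
        -- derivative at the junction point
        have hIic : HasDerivWithinAt γ' ((((fderiv ℝ g z 1)⁻¹ : ℝ) : ℂ)) (Set.Iic a) a := by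
          have hW := hWder a ha'lt le_rfl
          rw [hWa] at hW
          exact (hW.hasDerivWithinAt).congr
            (fun x hx => if_neg (not_lt.2 hx)) (if_neg (lt_irrefl a))
        have hIci : HasDerivWithinAt γ' ((((fderiv ℝ g z 1)⁻¹ : ℝ) : ℂ)) (Set.Ici a) a := by
          apply hasDerivWithinAt_Ici_of_tendsto_deriv (s := Set.Ioo a b)
          · intro u hu
            exact ((hγ'diffIoo u hu).differentiableAt).differentiableWithinAt
          · have h1 : Tendsto γ' (𝓝[Set.Ioo a b] a) (𝓝 z) := by
              have h2 : Tendsto γ (𝓝[Set.Ioo a b] a) (𝓝 z) :=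
                hz.mono_left (nhdsWithin_mono a Set.Ioo_subset_Ioi_self)
              apply h2.congr'
              filter_upwards [self_mem_nhdsWithin] with u hu
              exact (if_pos hu.1).symm
            have hγ'a : γ' a = z := hgteq
            unfold ContinuousWithinAt
            rw [hγ'a]
            exact h1
          · exact hIoo
          · have htend : Tendsto (fun u => (((fderiv ℝ g (γ u) 1)⁻¹ : ℝ) : ℂ)) (𝓝[>] a)
                (𝓝 ((((fderiv ℝ g z 1)⁻¹ : ℝ) : ℂ))) := by
              have h1 : Tendsto (fun u => fderiv ℝ g (γ u) 1) (𝓝[>] a) (𝓝 (fderiv ℝ g z 1)) :=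
                hpcontz.tendsto.comp hz
              exact (Complex.continuous_ofReal.tendsto _).comp (h1.inv₀ hp₀)
            apply htend.congr'
            filter_upwards [hIoo] with u hu
            exact ((hγ'diffIoo u hu).deriv).symm
        have := hIic.union hIci
        rw [Set.Iic_union_Ici] at this
        exact hasDerivWithinAt_univ.1 this
      · -- t < a
        have hgteq : γ' t = W t := if_neg (not_lt.2 hgt.le)
        obtain ⟨htgt, hwball⟩ := hgood t ht.1 hgt.le
        obtain ⟨hgne, hvel'⟩ := hlinevel (W t) hwball (hWim t)
        rw [hgteq]
        refine ⟨hball₁ (hball₂₁ hwball), hgne, ?_, ?_⟩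
        · rw [hvel']
          have heq : γ' =ᶠ[𝓝 t] W := by
            filter_upwards [isOpen_Iio.eventually_mem hgt] with v hv
            exact if_neg (not_lt.2 hv.le)
          exact (hWder t ht.1 hgt.le).congr_of_eventuallyEq heq
        · have := Ψ.right_inv htgt
          rw [hΨcoe] at this
          calc g (W t) = h (φ t) := by rw [hhdef, hWdef]
            _ = t := this
    obtain ⟨hcontra, -⟩ := hγ.2 a' b γ' (le_of_lt ha'lt) le_rfl hFL'
      (fun t ht => if_pos ht.1)
    exact absurd hcontra (ne_of_lt ha'lt)
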